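/- For each γ ∈ {α,β}: if ν is a σ_γ-invariant ergodic Borel probability measure on the full shift Σ_γ satisfying ∫ E_γ dν > 1, then ν(K_γ) = 1. -/

import Mathlib

open MeasureTheory Topology Filter
open scoped ENNReal NNReal


/-! ### The alphabet of the (M,N) Dyck–Motzkin shift -/

/-- The alphabet `D = D_α ∪ D_0 ∪ D_β` of the `(M,N)` Dyck–Motzkin shift:
`la k` is the left bracket `α_k`, `u k` is the unit `1_k`, `ra k` is the right bracket `β_k`. -/
inductive DMSym (M N : ℕ) : Type where
  | la : Fin M → DMSym M N
  | u  : Fin N → DMSym M N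
  | ra : Fin M → DMSym M N
deriving DecidableEq

namespace DMSym

def equivSum (M N : ℕ) : DMSym M N ≃ (Fin M ⊕ Fin N ⊕ Fin M) where
  toFun s := match s with
    | .la k => Sum.inl k
    | .u k => Sum.inr (Sum.inl k)
    | .ra k => Sum.inr (Sum.inr k)
  invFun s := match s with
    | Sum.inl k => .la k
    | Sum.inr (Sum.inl k) => .u k
    | Sum.inr (Sum.inr k) => .ra k
  left_inv s := by cases s <;> rfl
  right_inv s := by rcases s with k | k | k <;> rfl

instance (M N : ℕ) : Fintype (DMSym M N) := Fintype.ofEquiv _ (equivSum M N).symm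
instance (M N : ℕ) : TopologicalSpace (DMSym M N) := ⊥
instance (M N : ℕ) : DiscreteTopology (DMSym M N) := ⟨rfl⟩
instance (M N : ℕ) : MeasurableSpace (DMSym M N) := ⊤
instance (M N : ℕ) : BorelSpace (DMSym M N) := ⟨borel_eq_top_of_discrete.symm⟩

end DMSym

/-- Nonzero elements of the Dyck–Motzkin monoid with zero are represented in normal form:
`some (bs, as)` is the reduced word `β_{bs(0)} ⋯ β_{bs(r)} α_{as(0)} ⋯ α_{as(s)}`
(in particular `some ([], [])` is the unit element `1`); `none` is the zero element `0`. -/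
abbrev DyckElem (M : ℕ) := Option (List (Fin M) × List (Fin M))

/-- Multiplication, in the Dyck–Motzkin monoid with zero, of an element in normal form on
the right by a generator: units are absorbed, a left bracket is appended, and a right bracket
either closes the last left bracket (if the indices match), is appended (if there is no left
bracket to close), or produces the zero element (if the indices do not match). -/
def dyckStep {M N : ℕ} : DyckElem M → DMSym M N → DyckElem M
  | none, _ => none
  | some (bs, as), .la k => some (bs, as ++ [k])
  | some (bs, as), .u _ => some (bs, as)
  | some (bs, as), .ra k =>
      match as.getLast? with
      | none => some (bs ++ [k], [])
      | some j => if j = k then some (bs, as.dropLast) else none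

/-- `red w` is the image of the word `w` in the Dyck–Motzkin monoid with zero. -/
def red {M N : ℕ} (w : List (DMSym M N)) : DyckElem M :=
  w.foldl dyckStep (some ([], []))

/-- The word `x_j x_{j+1} ⋯ x_k` read off a bi-infinite sequence `x`. -/
def wordAt {M N : ℕ} (x : ℤ → DMSym M N) (j k : ℤ) : List (DMSym M N) :=
  (List.range (k + 1 - j).toNat).map fun n => x (j + n)

/-- The `(M,N)` Dyck–Motzkin shift `Σ_D`. -/
def SigmaD (M N : ℕ) : Set (ℤ → DMSym M N) :=
  {x | ∀ j k : ℤ, j < k → red (wordAt x j k) ≠ none}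

/-- The left shift `σ`. -/
def shift {A : Type*} : (ℤ → A) → (ℤ → A) := fun x i => x (i + 1)

/-- The inverse `σ⁻¹` of the left shift. -/
def shiftInv {A : Type*} : (ℤ → A) → (ℤ → A) := fun x i => x (i - 1)

lemma wordAt_shift {M N : ℕ} (x : ℤ → DMSym M N) (j k : ℤ) :
    wordAt (shift x) j k = wordAt x (j + 1) (k + 1) := by
  simp only [wordAt, shift]
  rw [show (k + 1 + 1 - (j + 1) : ℤ) = k + 1 - j by ring]
  exact List.map_congr_left fun n _ => by rw [show (j + n + 1 : ℤ) = j + 1 + n by ring]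

lemma shift_mem_SigmaD {M N : ℕ} {x : ℤ → DMSym M N} (hx : x ∈ SigmaD M N) :
    shift x ∈ SigmaD M N := by
  intro j k hjk
  rw [wordAt_shift]
  exact hx (j + 1) (k + 1) (by omega)

/-- The left shift acting on `Σ_D`. -/
def shiftD (M N : ℕ) : ↥(SigmaD M N) → ↥(SigmaD M N) :=
  fun x => ⟨shift x.val, shift_mem_SigmaD x.property⟩

/-- `G_j(x)`: `1` on left brackets, `-1` on right brackets, `0` on units. -/
def Gfun {M N : ℕ} (x : ℤ → DMSym M N) (j : ℤ) : ℤ :=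
  match x j with
  | .la _ => 1
  | .u _ => 0
  | .ra _ => -1

/-- `H_i(x) = Σ_{j=0}^{i-1} G_j(x)` for `i ≥ 1`, `H_i(x) = -Σ_{j=i}^{-1} G_j(x)` for
`i ≤ -1`, and `H_0(x) = 0`. -/
def Hfun {M N : ℕ} (x : ℤ → DMSym M N) (i : ℤ) : ℤ :=
  if 0 ≤ i then ∑ j ∈ Finset.range i.toNat, Gfun x (j : ℤ)
  else -∑ j ∈ Finset.range (-i).toNat, Gfun x (i + (j : ℤ))

/-- The set `A_0`. -/
def A0set (M N : ℕ) : Set (ℤ → DMSym M N) :=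
  SigmaD M N ∩ {x | ∀ i : ℤ,
    (∃ j : ℕ, 1 ≤ j ∧ Hfun x (i + (j : ℤ)) = Hfun x i) ∧
    (∃ j : ℕ, 1 ≤ j ∧ Hfun x (i - (j : ℤ)) = Hfun x i)}

/-- The set `A_α`. -/
def AalphaSet (M N : ℕ) : Set (ℤ → DMSym M N) :=
  SigmaD M N ∩ {x | Tendsto (Hfun x) atTop atTop ∧ Tendsto (Hfun x) atBot atBot}

/-- The set `A_β`. -/
def AbetaSet (M N : ℕ) : Set (ℤ → DMSym M N) :=
  SigmaD M N ∩ {x | Tendsto (Hfun x) atTop atBot ∧ Tendsto (Hfun x) atBot atTop}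

/-- The set `B_α` of sequences in `Σ_D` in which every right bracket is closed. -/
def BalphaSet (M N : ℕ) : Set (ℤ → DMSym M N) :=
  SigmaD M N ∩ {x | ∀ i : ℤ, (∃ k, x i = DMSym.ra k) →
    ∃ j : ℕ, 1 ≤ j ∧ Hfun x (i - (j : ℤ) + 1) = Hfun x (i + 1)}

/-- The set `B_β` of sequences in `Σ_D` in which every left bracket is closed. -/
def BbetaSet (M N : ℕ) : Set (ℤ → DMSym M N) :=
  SigmaD M N ∩ {x | ∀ i : ℤ, (∃ k, x i = DMSym.la k) →
    ∃ j : ℕ, 1 ≤ j ∧ Hfun x (i + (j : ℤ)) = Hfun x i}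

/-- The alphabet `D_α ∪ D_0 ∪ {β}` of the full shift `Σ_α`. -/
inductive AlSym (M N : ℕ) : Type where
  | la : Fin M → AlSym M N
  | u  : Fin N → AlSym M N
  | b  : AlSym M N
deriving DecidableEq

namespace AlSym

def equivSum (M N : ℕ) : AlSym M N ≃ (Fin M ⊕ Fin N ⊕ Unit) where
  toFun s := match s with
    | .la k => Sum.inl k
    | .u k => Sum.inr (Sum.inl k)
    | .b => Sum.inr (Sum.inr ())
  invFun s := match s with
    | Sum.inl k => .la k
    | Sum.inr (Sum.inl k) => .u k
    | Sum.inr (Sum.inr _) => .b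
  left_inv s := by cases s <;> rfl
  right_inv s := by rcases s with k | k | k <;> rfl

instance (M N : ℕ) : Fintype (AlSym M N) := Fintype.ofEquiv _ (equivSum M N).symm
instance (M N : ℕ) : TopologicalSpace (AlSym M N) := ⊥
instance (M N : ℕ) : DiscreteTopology (AlSym M N) := ⟨rfl⟩
instance (M N : ℕ) : MeasurableSpace (AlSym M N) := ⊤
instance (M N : ℕ) : BorelSpace (AlSym M N) := ⟨borel_eq_top_of_discrete.symm⟩

end AlSym

/-- The factor map `φ_α : Σ_D → Σ_α` replacing every right bracket by the single symbol `β`. -/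
def phiAl {M N : ℕ} (x : ℤ → DMSym M N) : ℤ → AlSym M N := fun i =>
  match x i with
  | .la k => .la k
  | .u k => .u k
  | .ra _ => .b

/-- `K_α = φ_α(B_α)`. -/
def Kalpha (M N : ℕ) : Set (ℤ → AlSym M N) := phiAl '' BalphaSet M N

/-- `G_{α,j}`. -/
def GAl {M N : ℕ} (y : ℤ → AlSym M N) (j : ℤ) : ℤ :=
  match y j with
  | .la _ => 1
  | .u _ => 0
  | .b => -1

/-- `H_{α,i}`. -/
def HAl {M N : ℕ} (y : ℤ → AlSym M N) (i : ℤ) : ℤ :=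
  if 0 ≤ i then ∑ j ∈ Finset.range i.toNat, GAl y (j : ℤ)
  else -∑ j ∈ Finset.range (-i).toNat, GAl y (i + (j : ℤ))

/-- `s_α(i,y) = max { j < i+1 : H_{α,j}(y) = H_{α,i+1}(y) }`. -/
noncomputable def sAl {M N : ℕ} (y : ℤ → AlSym M N) (i : ℤ) : ℤ :=
  sSup {j : ℤ | j < i + 1 ∧ HAl y j = HAl y (i + 1)}

/-- `ψ_α : K_α → Σ_D`, replacing each `β` by the right bracket matching the left bracket at
position `s_α(i,y)` (defined as a total function using a junk value outside `K_α`). -/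
noncomputable def psiAl (M N : ℕ) (hM : 0 < M) (y : ℤ → AlSym M N) : ℤ → DMSym M N := fun i =>
  match y i with
  | .la k => .la k
  | .u k => .u k
  | .b =>
    match y (sAl y i) with
    | .la k => .ra k
    | _ => .ra ⟨0, hM⟩

/-- The function `E_α = 2·𝟙_{Σ_α(α)} + 𝟙_{Σ_α(0)}`. -/
def EAl {M N : ℕ} (y : ℤ → AlSym M N) : ℝ :=
  match y 0 with
  | .la _ => 2
  | .u _ => 1
  | .b => 0

/-- The alphabet `{α} ∪ D_0 ∪ D_β` of the full shift `Σ_β`. -/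
inductive BeSym (M N : ℕ) : Type where
  | a  : BeSym M N
  | u  : Fin N → BeSym M N
  | ra : Fin M → BeSym M N
deriving DecidableEq

namespace BeSym

def equivSum (M N : ℕ) : BeSym M N ≃ (Unit ⊕ Fin N ⊕ Fin M) where
  toFun s := match s with
    | .a => Sum.inl ()
    | .u k => Sum.inr (Sum.inl k)
    | .ra k => Sum.inr (Sum.inr k)
  invFun s := match s with
    | Sum.inl _ => .a
    | Sum.inr (Sum.inl k) => .u k
    | Sum.inr (Sum.inr k) => .ra k
  left_inv s := by cases s <;> rfl
  right_inv s := by rcases s with k | k | k <;> rfl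

instance (M N : ℕ) : Fintype (BeSym M N) := Fintype.ofEquiv _ (equivSum M N).symm
instance (M N : ℕ) : TopologicalSpace (BeSym M N) := ⊥
instance (M N : ℕ) : DiscreteTopology (BeSym M N) := ⟨rfl⟩
instance (M N : ℕ) : MeasurableSpace (BeSym M N) := ⊤
instance (M N : ℕ) : BorelSpace (BeSym M N) := ⟨borel_eq_top_of_discrete.symm⟩

end BeSym

/-- The factor map `φ_β : Σ_D → Σ_β` replacing every left bracket by the single symbol `α`. -/
def phiBe {M N : ℕ} (x : ℤ → DMSym M N) : ℤ → BeSym M N := fun i =>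
  match x i with
  | .la _ => .a
  | .u k => .u k
  | .ra k => .ra k

/-- `K_β = φ_β(B_β)`. -/
def Kbeta (M N : ℕ) : Set (ℤ → BeSym M N) := phiBe '' BbetaSet M N

/-- `G_{β,j}`. -/
def GBe {M N : ℕ} (y : ℤ → BeSym M N) (j : ℤ) : ℤ :=
  match y j with
  | .a => 1
  | .u _ => 0
  | .ra _ => -1

/-- `H_{β,i}`. -/
def HBe {M N : ℕ} (y : ℤ → BeSym M N) (i : ℤ) : ℤ :=
  if 0 ≤ i then ∑ j ∈ Finset.range i.toNat, GBe y (j : ℤ)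
  else -∑ j ∈ Finset.range (-i).toNat, GBe y (i + (j : ℤ))

/-- `s_β(i,y) = min { j > i : H_{β,j}(y) = H_{β,i}(y) }`. -/
noncomputable def sBe {M N : ℕ} (y : ℤ → BeSym M N) (i : ℤ) : ℤ :=
  sInf {j : ℤ | i < j ∧ HBe y j = HBe y i}

/-- `ψ_β : K_β → Σ_D`, replacing each `α` by the left bracket matching the right bracket at
position `s_β(i,y)` (defined as a total function using a junk value outside `K_β`). -/
noncomputable def psiBe (M N : ℕ) (hM : 0 < M) (y : ℤ → BeSym M N) : ℤ → DMSym M N := fun i =>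
  match y i with
  | .a =>
    match y (sBe y i) with
    | .ra k => .la k
    | _ => .la ⟨0, hM⟩
  | .u k => .u k
  | .ra k => .ra k

/-- The function `E_β = 2·𝟙_{Σ_β(β)} + 𝟙_{Σ_β(0)}`. -/
def EBe {M N : ℕ} (y : ℤ → BeSym M N) : ℝ :=
  match y 0 with
  | .a => 0
  | .u _ => 1
  | .ra _ => 2


/-!
Read `y ∈ Σ_γ` as a walk with steps `G_γ`. Since `E_γ = 1 ± G_{γ,0}`, the hypothesis
`∫ E_γ dν > 1` says that the walk has positive drift (`γ = α`) or negative drift (`γ = β`).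
For an ergodic map `τ` and integer steps `g ≥ -1` with `∫ g < 0`, the clamped running minimum
`T = ⨅ n, max (S_n g) C` satisfies `T - T ∘ τ ≤ g + 𝟙{∃ n, S_n g ≤ C}`; integrating gives
`ν {∃ n, S_n g ≤ C} ≥ -∫ g > 0` for every `C`, so the invariant event that the Birkhoff sums are
unbounded below has full measure. Hence the walk is almost surely unbounded below in the past
(`γ = α`) or in the future (`γ = β`), and since its steps are at most one, every `β` in `y`
returns to its height at an earlier position (every `α` at a later one). Labelling each `β`
(resp. `α`) by the index of the bracket it closes gives a sequence of `B_γ` over `y`; it lies in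
`Σ_D` because reading a word with a stack of open left brackets never meets a right bracket
with the wrong index.
-/

lemma integrable_intCast_of_abs_le_one {Ω : Type*} [MeasurableSpace Ω] {μ : Measure Ω}
    [IsFiniteMeasure μ] {f : Ω → ℤ} (hf : Measurable f) (hb : ∀ y, |f y| ≤ 1) :
    Integrable (fun y => (f y : ℝ)) μ :=
  .of_bound (measurable_from_top.comp hf).aestronglyMeasurable 1 (.of_forall fun y => by
    rw [Real.norm_eq_abs, ← Int.cast_abs]; exact_mod_cast hb y)

namespace Birkhoff

open Set

variable {Ω : Type*} {τ : Ω → Ω} {g : Ω → ℤ}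

noncomputable def clampedInf (τ : Ω → Ω) (g : Ω → ℤ) (C : ℤ) (y : Ω) : ℤ :=
  ⨅ n, max (birkhoffSum τ g n y) C

lemma bddBelow_range_max_birkhoffSum (C : ℤ) (y : Ω) :
    BddBelow (range fun n => max (birkhoffSum τ g n y) C) :=
  ⟨C, by rintro _ ⟨n, rfl⟩; exact le_max_right _ _⟩

lemma clampedInf_le (C : ℤ) (y : Ω) (n : ℕ) :
    clampedInf τ g C y ≤ max (birkhoffSum τ g n y) C :=
  ciInf_le (bddBelow_range_max_birkhoffSum C y) n

lemma le_clampedInf (C : ℤ) (y : Ω) : C ≤ clampedInf τ g C y :=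
  le_ciInf fun _ => le_max_right _ _

lemma exists_clampedInf_eq (C : ℤ) (y : Ω) :
    ∃ n, max (birkhoffSum τ g n y) C = clampedInf τ g C y :=
  Int.csInf_mem (range_nonempty _) (bddBelow_range_max_birkhoffSum C y)

lemma abs_clampedInf_le (C : ℤ) (y : Ω) : |clampedInf τ g C y| ≤ |C| := by
  have h0 := clampedInf_le (τ := τ) (g := g) C y 0
  rw [birkhoffSum_zero] at h0
  have := le_clampedInf (τ := τ) (g := g) C y
  rw [abs_le]
  constructor <;> cases abs_cases C <;> omega

lemma clampedInf_le_add_of_lt {C : ℤ} {y : Ω} (h : C < clampedInf τ g C y) :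
    clampedInf τ g C y ≤ g y + clampedInf τ g C (τ y) := by
  obtain ⟨k, hk⟩ := exists_clampedInf_eq (τ := τ) (g := g) C (τ y)
  have := clampedInf_le (τ := τ) (g := g) C y (k + 1)
  rw [birkhoffSum_succ'] at this
  omega

lemma exists_birkhoffSum_le_of_clampedInf_eq {C : ℤ} {y : Ω} (h : clampedInf τ g C y = C) :
    ∃ n, birkhoffSum τ g n y ≤ C := by
  obtain ⟨n, hn⟩ := exists_clampedInf_eq (τ := τ) (g := g) C y
  exact ⟨n, by omega⟩

lemma clampedInf_sub_le (hg : ∀ y, -1 ≤ g y) (C : ℤ) (y : Ω) :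
    (clampedInf τ g C y : ℝ) - clampedInf τ g C (τ y) ≤
      g y + {y | ∃ n, birkhoffSum τ g n y ≤ C}.indicator 1 y := by
  have hτy := le_clampedInf (τ := τ) (g := g) C (τ y)
  rcases (le_clampedInf (τ := τ) (g := g) C y).lt_or_eq with hlt | heq
  · have hle : (clampedInf τ g C y : ℝ) ≤ g y + clampedInf τ g C (τ y) := by
      exact_mod_cast clampedInf_le_add_of_lt hlt
    have : (0 : ℝ) ≤ {y | ∃ n, birkhoffSum τ g n y ≤ C}.indicator 1 y :=
      indicator_nonneg (fun _ _ => zero_le_one) y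
    linarith
  · rw [indicator_of_mem (s := {y | ∃ n, birkhoffSum τ g n y ≤ C})
        (exists_birkhoffSum_le_of_clampedInf_eq heq.symm), Pi.one_apply]
    have := hg y
    exact_mod_cast (by omega : clampedInf τ g C y - clampedInf τ g C (τ y) ≤ g y + 1)

lemma preimage_setOf_forall_exists_birkhoffSum_le :
    τ ⁻¹' {y | ∀ C : ℤ, ∃ n, birkhoffSum τ g n y ≤ C} =
      {y | ∀ C : ℤ, ∃ n, birkhoffSum τ g n y ≤ C} := by
  ext y
  simp only [mem_preimage, mem_ofPred_eq]
  constructor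
  · intro h C
    obtain ⟨n, hn⟩ := h (C - g y)
    exact ⟨n + 1, by rw [birkhoffSum_succ']; omega⟩
  · intro h C
    obtain ⟨n, hn⟩ := h (min (C + g y) (-1))
    cases n with
    | zero => simp at hn
    | succ n => exact ⟨n, by rw [birkhoffSum_succ'] at hn; omega⟩

variable [MeasurableSpace Ω] {μ : Measure Ω}

lemma measurable_birkhoffSum (hτ : Measurable τ) (hg : Measurable g) (n : ℕ) :
    Measurable (birkhoffSum τ g n) := by
  unfold birkhoffSum; fun_prop

lemma measurableSet_exists_birkhoffSum_le (hτ : Measurable τ) (hg : Measurable g) (C : ℤ) :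
    MeasurableSet {y | ∃ n, birkhoffSum τ g n y ≤ C} := by
  simp only [ofPred_exists]
  exact .iUnion fun n => measurableSet_le (measurable_birkhoffSum hτ hg n) measurable_const

lemma measurable_clampedInf (hτ : Measurable τ) (hg : Measurable g) (C : ℤ) :
    Measurable (clampedInf τ g C) :=
  .iInf fun n => (measurable_birkhoffSum hτ hg n).max measurable_const

lemma neg_integral_le_measureReal_exists_birkhoffSum_le [IsFiniteMeasure μ]
    (hτ : MeasurePreserving τ μ μ) (hgm : Measurable g)
    (hgi : Integrable (fun y => (g y : ℝ)) μ) (hg : ∀ y, -1 ≤ g y) (C : ℤ) :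
    -∫ y, (g y : ℝ) ∂μ ≤ μ.real {y | ∃ n, birkhoffSum τ g n y ≤ C} := by
  set A := {y | ∃ n, birkhoffSum τ g n y ≤ C}
  have hA := measurableSet_exists_birkhoffSum_le hτ.measurable hgm C
  set T : Ω → ℝ := fun y => clampedInf τ g C y
  have hTm : Measurable T := measurable_from_top.comp (measurable_clampedInf hτ.measurable hgm C)
  have hTi : Integrable T μ := Integrable.of_bound hTm.aestronglyMeasurable |C|
    (.of_forall fun y => by
      rw [Real.norm_eq_abs, ← Int.cast_abs]; exact_mod_cast abs_clampedInf_le C y)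
  have hTτi : Integrable (fun y => T (τ y)) μ := hτ.integrable_comp_of_integrable hTi
  have hTτ : ∫ y, T (τ y) ∂μ = ∫ y, T y ∂μ := by
    rw [← integral_map hτ.measurable.aemeasurable hTm.aestronglyMeasurable, hτ.map_eq]
  have hAi : Integrable (A.indicator 1) μ := (integrable_const (1 : ℝ)).indicator hA
  have key : ∫ y, (T y - T (τ y)) ∂μ ≤ ∫ y, ((g y : ℝ) + A.indicator 1 y) ∂μ :=
    integral_mono (hTi.sub hTτi) (hgi.add hAi) (clampedInf_sub_le hg C)
  rw [integral_sub hTi hTτi, hTτ, sub_self, integral_add hgi hAi,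
    integral_indicator_one hA] at key
  linarith

theorem ae_forall_exists_birkhoffSum_le [IsProbabilityMeasure μ] (hτ : Ergodic τ μ)
    (hgm : Measurable g) (hgi : Integrable (fun y => (g y : ℝ)) μ) (hg : ∀ y, -1 ≤ g y)
    (hneg : ∫ y, (g y : ℝ) ∂μ < 0) :
    ∀ᵐ y ∂μ, ∀ C : ℤ, ∃ n, birkhoffSum τ g n y ≤ C := by
  have hA := measurableSet_exists_birkhoffSum_le hτ.measurable hgm
  have hE : {y | ∀ C : ℤ, ∃ n, birkhoffSum τ g n y ≤ C} =
      ⋂ C : ℤ, {y | ∃ n, birkhoffSum τ g n y ≤ C} := ofPred_forall _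
  have hEm : MeasurableSet {y | ∀ C : ℤ, ∃ n, birkhoffSum τ g n y ≤ C} := hE ▸ .iInter hA
  have hEpos : μ {y | ∀ C : ℤ, ∃ n, birkhoffSum τ g n y ≤ C} ≠ 0 := by
    have hmono : Monotone fun C : ℤ => {y | ∃ n, birkhoffSum τ g n y ≤ C} :=
      fun C D hCD y ⟨n, hn⟩ => ⟨n, hn.trans hCD⟩
    have : ENNReal.ofReal (-∫ y, (g y : ℝ) ∂μ) ≤
        μ {y | ∀ C : ℤ, ∃ n, birkhoffSum τ g n y ≤ C} := by
      rw [hE, hmono.measure_iInter (fun C => (hA C).nullMeasurableSet) ⟨0, measure_ne_top _ _⟩]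
      exact le_iInf fun C => (ENNReal.ofReal_le_iff_le_toReal (measure_ne_top _ _)).2
        (neg_integral_le_measureReal_exists_birkhoffSum_le hτ.toMeasurePreserving hgm hgi hg C)
    exact ((ENNReal.ofReal_pos.2 (neg_pos.2 hneg)).trans_le this).ne'
  exact (hτ.ae_mem_or_ae_notMem hEm preimage_setOf_forall_exists_birkhoffSum_le).resolve_right
    fun h => hEpos (measure_eq_zero_iff_ae_notMem.2 h)

end Birkhoff

lemma Int.exists_mem_Icc_eq_of_le_add_one {f : ℤ → ℤ} (hf : ∀ q, f (q + 1) ≤ f q + 1)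
    {a b c : ℤ} (hab : a ≤ b) (ha : f a ≤ c) (hb : c ≤ f b) :
    ∃ m ∈ Set.Icc a b, f m = c := by
  induction b, hab using Int.leInduction with
  | base => exact ⟨a, ⟨le_rfl, le_rfl⟩, by omega⟩
  | succ b hab ih =>
    by_cases hcb : c ≤ f b
    · obtain ⟨m, ⟨h1, h2⟩, h3⟩ := ih hcb
      exact ⟨m, ⟨h1, by omega⟩, h3⟩
    · exact ⟨b + 1, ⟨by omega, le_rfl⟩, by have := hf b; omega⟩

namespace DyckMotzkin

/-- `Hfun x`, `HAl y` and `HBe y` unfold to `height` of their step sequences. -/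
def height (g : ℤ → ℤ) (i : ℤ) : ℤ :=
  if 0 ≤ i then ∑ j ∈ Finset.range i.toNat, g j
  else -∑ j ∈ Finset.range (-i).toNat, g (i + j)

section Height

variable (g : ℤ → ℤ)

@[simp] lemma height_zero : height g 0 = 0 := by simp [height]

lemma height_natCast (n : ℕ) : height g n = ∑ k ∈ Finset.range n, g k := by
  simp [height]

lemma height_neg_natCast (n : ℕ) : height g (-n) = -∑ k ∈ Finset.range n, g (-n + k) := by
  rcases n with _ | n
  · simp
  · rw [height, if_neg (by omega), show (-(-((n + 1 : ℕ) : ℤ))).toNat = n + 1 by omega]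

lemma height_succ (i : ℤ) : height g (i + 1) = height g i + g i := by
  rcases le_or_gt 0 i with hi | hi
  · rw [show i = (i.toNat : ℤ) by omega, ← Nat.cast_succ, height_natCast, height_natCast,
      Finset.sum_range_succ]
  · obtain ⟨n, rfl⟩ : ∃ n : ℕ, i = -(n + 1 : ℕ) := ⟨(-i - 1).toNat, by omega⟩
    rw [show -((n + 1 : ℕ) : ℤ) + 1 = -n by push_cast; ring, height_neg_natCast,
      height_neg_natCast, Finset.sum_range_succ']
    push_cast
    ring_nf

variable {g} (hg : ∀ j, |g j| ≤ 1)
include hg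

lemma abs_height_le (i : ℤ) : |height g i| ≤ |i| := by
  induction i using Int.induction_on with
  | zero => simp
  | succ i ih =>
    have := height_succ g i
    have := abs_le.1 (hg i)
    rw [abs_le] at ih ⊢
    cases abs_cases (i : ℤ) <;> cases abs_cases ((i : ℤ) + 1) <;> omega
  | pred i ih =>
    have := height_succ g (-i - 1)
    have := abs_le.1 (hg (-i - 1))
    rw [sub_add_cancel] at *
    rw [abs_le] at ih ⊢
    cases abs_cases (-(i : ℤ)) <;> cases abs_cases (-(i : ℤ) - 1) <;> omega

lemma exists_le_height_eq_of_eq_neg_one (hunb : ∀ C, ∃ n : ℕ, height g (-n) ≤ C) {i : ℤ}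
    (hi : g i = -1) : ∃ m ≤ i, height g m = height g (i + 1) := by
  obtain ⟨n, hn⟩ := hunb (min (height g (i + 1)) i)
  have := abs_le.1 (abs_height_le hg (-n))
  have hsucc := height_succ g i
  obtain ⟨m, ⟨-, hmi⟩, hm⟩ := Int.exists_mem_Icc_eq_of_le_add_one
    (fun q => by have := height_succ g q; have := abs_le.1 (hg q); omega)
    (show -(n : ℤ) ≤ i by cases abs_cases (-(n : ℤ)) <;> omega) (hn.trans (min_le_left _ _))
    (show height g (i + 1) ≤ height g i by omega)
  exact ⟨m, hmi, hm⟩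

lemma exists_gt_height_eq_of_eq_one (hunb : ∀ C, ∃ n : ℕ, height g n ≤ C) {i : ℤ}
    (hi : g i = 1) : ∃ m, i < m ∧ height g m = height g i := by
  obtain ⟨n, hn⟩ := hunb (min (height g i) (-|i| - 1))
  have := abs_le.1 (abs_height_le hg n)
  have hsucc := height_succ g i
  obtain ⟨m, ⟨him, -⟩, hm⟩ :=
    Int.exists_mem_Icc_eq_of_le_add_one (f := fun q => -height g q)
    (fun q => by have := height_succ g q; have := abs_le.1 (hg q); omega)
    (show i + 1 ≤ n by cases abs_cases i <;> cases abs_cases (n : ℤ) <;> omega)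
    (show -height g (i + 1) ≤ -height g i by omega)
    (show -height g i ≤ -height g n by omega)
  exact ⟨m, by omega, by omega⟩

end Height

variable {M N : ℕ}

lemma Hfun_succ (x : ℤ → DMSym M N) (t : ℤ) : Hfun x (t + 1) = Hfun x t + Gfun x t :=
  height_succ _ t

lemma red_append_singleton (w : List (DMSym M N)) (a : DMSym M N) :
    red (w ++ [a]) = dyckStep (red w) a := by
  simp [red, List.foldl_append]

lemma wordAt_eq (x : ℤ → DMSym M N) (j k : ℤ) :
    wordAt x j k = (List.range (k + 1 - j).toNat).map fun m : ℕ => x (j + m) := by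
  simp only [wordAt, List.bind_eq_flatMap]
  rw [show (fun a : ℕ => pure (a : ℤ)) = pure ∘ (fun a : ℕ => (a : ℤ)) from rfl,
    List.flatMap_pure_eq_map, List.map_map]
  rfl

/-- In the height profile `h`, the bracket at `i` closes the one at `p`. -/
def ClosesAt (h : ℤ → ℤ) (p i : ℤ) : Prop :=
  p ≤ i ∧ h p = h (i + 1) ∧ ∀ q, p < q → q ≤ i → h p < h q

/-- `st` lists the left brackets still open just before position `t`, the most recent first. -/
structure IsOpenStack (x : ℤ → DMSym M N) (t : ℤ) (st : List (ℤ × Fin M)) : Prop where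
  lt_of_mem : ∀ e ∈ st, e.1 < t
  la_of_mem : ∀ e ∈ st, x e.1 = .la e.2
  height_lt : ∀ e ∈ st, ∀ q, e.1 < q → q ≤ t → Hfun x e.1 < Hfun x q
  head : ∀ e ∈ st.head?, Hfun x t = Hfun x e.1 + 1
  chain : st.IsChain fun a b => Hfun x a.1 = Hfun x b.1 + 1

namespace IsOpenStack

variable {x : ℤ → DMSym M N} {t : ℤ} {st : List (ℤ × Fin M)}

lemma nil (x : ℤ → DMSym M N) (t : ℤ) : IsOpenStack x t [] := by
  constructor <;> simp

lemma push (hst : IsOpenStack x t st) {k : Fin M} (hxt : x t = .la k) :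
    IsOpenStack x (t + 1) ((t, k) :: st) := by
  have hH : Hfun x (t + 1) = Hfun x t + 1 := by rw [Hfun_succ, Gfun, hxt]
  refine ⟨?_, ?_, ?_, ?_, ?_⟩
  · rintro e (_ | ⟨_, he⟩)
    · simp
    · have := hst.lt_of_mem e he; omega
  · rintro e (_ | ⟨_, he⟩)
    · exact hxt
    · exact hst.la_of_mem e he
  · rintro e (_ | ⟨_, he⟩) q hq hqt
    · obtain rfl : q = t + 1 := by simp at hq; omega
      show Hfun x t < Hfun x (t + 1)
      omega
    · rcases (show q ≤ t ∨ q = t + 1 by omega) with hq' | rfl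
      · exact hst.height_lt e he q hq hq'
      · have := hst.height_lt e he t (hst.lt_of_mem e he) le_rfl; omega
  · simpa using hH
  · exact List.isChain_cons.2 ⟨fun e he => hst.head e he, hst.chain⟩

lemma skip (hst : IsOpenStack x t st) {k : Fin N} (hxt : x t = .u k) :
    IsOpenStack x (t + 1) st := by
  have hH : Hfun x (t + 1) = Hfun x t := by rw [Hfun_succ, Gfun, hxt, add_zero]
  refine ⟨fun e he => ?_, hst.la_of_mem, fun e he q hq hqt => ?_, fun e he => ?_, hst.chain⟩
  · have := hst.lt_of_mem e he; omega
  · rcases (show q ≤ t ∨ q = t + 1 by omega) with hq' | rfl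
    · exact hst.height_lt e he q hq hq'
    · rw [hH]; exact hst.height_lt e he t (hst.lt_of_mem e he) le_rfl
  · rw [hH]; exact hst.head e he

lemma closesAt_head {e : ℤ × Fin M} (hst : IsOpenStack x t (e :: st)) {l : Fin M}
    (hxt : x t = .ra l) : ClosesAt (Hfun x) e.1 t := by
  have hH : Hfun x (t + 1) = Hfun x t - 1 := by rw [Hfun_succ, Gfun, hxt]; ring
  have := hst.head e rfl
  exact ⟨(hst.lt_of_mem e (by simp)).le, by omega,
    fun q hq hqt => hst.height_lt e (by simp) q hq hqt⟩

lemma pop {e : ℤ × Fin M} (hst : IsOpenStack x t (e :: st)) {l : Fin M} (hxt : x t = .ra l) :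
    IsOpenStack x (t + 1) st := by
  obtain ⟨-, he, -⟩ := hst.closesAt_head hxt
  have hchain := List.isChain_cons.1 hst.chain
  refine ⟨fun a ha => ?_, fun a ha => hst.la_of_mem a (by simp [ha]), fun a ha q hq hqt => ?_,
    fun a ha => ?_, hchain.2⟩
  · have := hst.lt_of_mem a (by simp [ha]); omega
  · rcases (show q ≤ t ∨ q = t + 1 by omega) with hq' | rfl
    · exact hst.height_lt a (by simp [ha]) q hq hq'
    · have hlt : Hfun x a.1 < Hfun x e.1 :=
        List.rel_of_pairwise_cons ((hst.chain.imp fun a b (h : _ = _) => (by omega :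
          Hfun x b.1 < Hfun x a.1)).pairwise) ha
      omega
  · have := hchain.1 a ha; omega

end IsOpenStack

lemma mem_SigmaD_of_closesAt (x : ℤ → DMSym M N)
    (hmatch : ∀ p i k l, x p = .la k → x i = .ra l → ClosesAt (Hfun x) p i → k = l) :
    x ∈ SigmaD M N := by
  intro j k _
  suffices ∀ n : ℕ, ∃ bs st, IsOpenStack x (j + n) st ∧
      red ((List.range n).map fun m : ℕ => x (j + m)) = some (bs, (st.map Prod.snd).reverse) by
    obtain ⟨bs, st, -, h⟩ := this (k + 1 - j).toNat
    rw [wordAt_eq, h]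
    simp
  intro n
  induction n with
  | zero => exact ⟨[], [], .nil x _, rfl⟩
  | succ n ih =>
    obtain ⟨bs, st, hst, hred⟩ := ih
    rw [List.range_succ, List.map_append, List.map_singleton, red_append_singleton, hred,
      Nat.cast_succ, ← add_assoc]
    cases hxt : x (j + n) with
    | la k => exact ⟨bs, _, hst.push hxt, by simp [dyckStep]⟩
    | u k => exact ⟨bs, st, hst.skip hxt, rfl⟩
    | ra l =>
      cases st with
      | nil => exact ⟨bs ++ [l], [], .nil x _, rfl⟩
      | cons e st =>
        have hkl := hmatch _ _ _ _ (hst.la_of_mem e (by simp)) hxt (hst.closesAt_head hxt)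
        exact ⟨bs, st, hst.pop hxt, by simp [dyckStep, hkl]⟩

lemma HAl_phiAl (x : ℤ → DMSym M N) : HAl (phiAl x) = Hfun x := by
  have : GAl (phiAl x) = Gfun x := by
    funext j; simp only [GAl, phiAl, Gfun]; cases x j <;> rfl
  exact congrArg height this

lemma HBe_phiBe (x : ℤ → DMSym M N) : HBe (phiBe x) = Hfun x := by
  have : GBe (phiBe x) = Gfun x := by
    funext j; simp only [GBe, phiBe, Gfun]; cases x j <;> rfl
  exact congrArg height this

lemma sAl_eq_of_closesAt {y : ℤ → AlSym M N} {p i : ℤ} (h : ClosesAt (HAl y) p i) :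
    sAl y i = p := by
  obtain ⟨hpi, hp, hmin⟩ := h
  refine IsGreatest.csSup_eq ⟨⟨by omega, hp⟩, fun q ⟨hqi, hq⟩ => ?_⟩
  by_contra! hpq
  have := hmin q hpq (by omega)
  omega

lemma sBe_eq_of_closesAt {y : ℤ → BeSym M N} {p i : ℤ} (h : ClosesAt (HBe y) p i) :
    sBe y p = i + 1 := by
  obtain ⟨hpi, hp, hmin⟩ := h
  refine IsLeast.csInf_eq ⟨⟨by omega, hp.symm⟩, fun q ⟨hpq, hq⟩ => ?_⟩
  by_contra! hqi
  have := hmin q hpq (by omega)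
  omega

section Alpha

variable (hM : 0 < M) (y : ℤ → AlSym M N)

lemma phiAl_psiAl : phiAl (psiAl M N hM y) = y := by
  funext i
  rcases hyi : y i with k | k | _ <;> simp only [phiAl, psiAl, hyi]
  rcases y (sAl y i) with k | k | _ <;> rfl

lemma psiAl_mem_SigmaD : psiAl M N hM y ∈ SigmaD M N := by
  refine mem_SigmaD_of_closesAt _ fun p i k l hp hi hc => ?_
  have hy := phiAl_psiAl hM y
  rw [← HAl_phiAl, hy] at hc
  have hyp : y p = .la k := by rw [← hy, phiAl, hp]
  have hyi : y i = .b := by rw [← hy, phiAl, hi]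
  have : psiAl M N hM y i = .ra k := by simp only [psiAl, hyi, sAl_eq_of_closesAt hc, hyp]
  rw [hi] at this
  exact (DMSym.ra.inj this).symm

lemma psiAl_mem_BalphaSet (hy : ∀ i, y i = .b → ∃ m ≤ i, HAl y m = HAl y (i + 1)) :
    psiAl M N hM y ∈ BalphaSet M N := by
  refine ⟨psiAl_mem_SigmaD hM y, fun i ⟨k, hk⟩ => ?_⟩
  have hyi : y i = .b := by rw [← phiAl_psiAl hM y, phiAl, hk]
  obtain ⟨m, hmi, hm⟩ := hy i hyi
  refine ⟨(i + 1 - m).toNat, by omega, ?_⟩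
  rwa [← HAl_phiAl, phiAl_psiAl, show i - ((i + 1 - m).toNat : ℤ) + 1 = m by omega]

end Alpha

/-- Unlike `psiBe`, which reads the symbol at `sBe y i`, one past the matching right bracket,
this reads the matching bracket itself. -/
noncomputable def psiBe' (M N : ℕ) (hM : 0 < M) (y : ℤ → BeSym M N) (i : ℤ) : DMSym M N :=
  match y i with
  | .a =>
    match y (sBe y i - 1) with
    | .ra k => .la k
    | _ => .la ⟨0, hM⟩
  | .u k => .u k
  | .ra k => .ra k

section Beta

variable (hM : 0 < M) (y : ℤ → BeSym M N)

lemma phiBe_psiBe' : phiBe (psiBe' M N hM y) = y := by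
  funext i
  rcases hyi : y i with _ | k | k <;> simp only [phiBe, psiBe', hyi]
  rcases y (sBe y i - 1) with _ | k | k <;> rfl

lemma psiBe'_mem_SigmaD : psiBe' M N hM y ∈ SigmaD M N := by
  refine mem_SigmaD_of_closesAt _ fun p i k l hp hi hc => ?_
  have hy := phiBe_psiBe' hM y
  rw [← HBe_phiBe, hy] at hc
  have hyp : y p = .a := by rw [← hy, phiBe, hp]
  have hyi : y i = .ra l := by rw [← hy, phiBe, hi]
  have : psiBe' M N hM y p = .la l := by
    simp only [psiBe', hyp, sBe_eq_of_closesAt hc, add_sub_cancel_right, hyi]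
  rw [hp] at this
  exact DMSym.la.inj this

lemma psiBe'_mem_BbetaSet (hy : ∀ i, y i = .a → ∃ m, i < m ∧ HBe y m = HBe y i) :
    psiBe' M N hM y ∈ BbetaSet M N := by
  refine ⟨psiBe'_mem_SigmaD hM y, fun i ⟨k, hk⟩ => ?_⟩
  have hyi : y i = .a := by rw [← phiBe_psiBe' hM y, phiBe, hk]
  obtain ⟨m, him, hm⟩ := hy i hyi
  refine ⟨(m - i).toNat, by omega, ?_⟩
  rwa [← HBe_phiBe, phiBe_psiBe', show i + ((m - i).toNat : ℤ) = m by omega]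

end Beta

section Shift

variable {A : Type*}

lemma shift_iterate_apply (y : ℤ → A) (n : ℕ) (i : ℤ) : shift^[n] y i = y (i + n) := by
  induction n generalizing i with
  | zero => simp
  | succ n ih => rw [Function.iterate_succ_apply', shift, ih]; push_cast; ring_nf

lemma shiftInv_iterate_apply (y : ℤ → A) (n : ℕ) (i : ℤ) :
    shiftInv^[n] y i = y (i - n) := by
  induction n generalizing i with
  | zero => simp
  | succ n ih => rw [Function.iterate_succ_apply', shiftInv, ih]; push_cast; ring_nf

variable [MeasurableSpace A]

def shiftEquiv : (ℤ → A) ≃ᵐ (ℤ → A) where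
  toFun := shift
  invFun := shiftInv
  left_inv x := funext fun i => congrArg x (sub_add_cancel i 1)
  right_inv x := funext fun i => congrArg x (add_sub_cancel_right i 1)
  measurable_toFun := measurable_pi_lambda _ fun i => measurable_pi_apply (i + 1)
  measurable_invFun := measurable_pi_lambda _ fun i => measurable_pi_apply (i - 1)

lemma ergodic_shiftInv {μ : Measure (ℤ → A)} (h : Ergodic shift μ) : Ergodic shiftInv μ :=
  Ergodic.symm (e := shiftEquiv) h

end Shift

section Alpha

lemma HAl_eq_height (y : ℤ → AlSym M N) : HAl y = height (GAl y) := rfl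

lemma abs_GAl_le (y : ℤ → AlSym M N) (j : ℤ) : |GAl y j| ≤ 1 := by
  unfold GAl; rcases y j with k | k | _ <;> simp

lemma measurable_GAl (j : ℤ) : Measurable fun y : ℤ → AlSym M N => GAl y j :=
  (measurable_from_top (f := fun s : AlSym M N => GAl (fun _ => s) 0)).comp (measurable_pi_apply j)

lemma EAl_eq (y : ℤ → AlSym M N) : EAl y = 1 + GAl y 0 := by
  unfold EAl GAl; rcases y 0 with k | k | _ <;> norm_num

lemma integral_EAl (μ : Measure (ℤ → AlSym M N)) [IsProbabilityMeasure μ] :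
    ∫ y, EAl y ∂μ = 1 + ∫ y, (GAl y 0 : ℝ) ∂μ := by
  simp_rw [EAl_eq]
  rw [integral_add (integrable_const 1)
    (integrable_intCast_of_abs_le_one (measurable_GAl 0) (abs_GAl_le · 0)), integral_const,
    probReal_univ, one_smul]

lemma birkhoffSum_shiftInv_GAl (y : ℤ → AlSym M N) (n : ℕ) :
    birkhoffSum shiftInv (fun z => -GAl z (-1)) n y = HAl y (-n) := by
  induction n with
  | zero => simp [birkhoffSum_zero, HAl]
  | succ n ih =>
    have hG : GAl (shiftInv^[n] y) (-1) = GAl y (-(n + 1 : ℕ)) := by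
      simp only [GAl, shiftInv_iterate_apply]; push_cast; ring_nf
    have := height_succ (GAl y) (-(n + 1 : ℕ))
    rw [show -((n + 1 : ℕ) : ℤ) + 1 = -n by push_cast; ring] at this
    rw [birkhoffSum_succ, ih, hG, HAl_eq_height]
    omega

lemma mem_Kalpha_of_forall_exists_HAl_le (hM : 0 < M) {y : ℤ → AlSym M N}
    (hy : ∀ C, ∃ n : ℕ, HAl y (-n) ≤ C) : y ∈ Kalpha M N :=
  ⟨_, psiAl_mem_BalphaSet hM y fun i hi =>
    exists_le_height_eq_of_eq_neg_one (abs_GAl_le y) hy (by simp [GAl, hi]), phiAl_psiAl hM y⟩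

lemma measure_Kalpha_eq_one (hM : 0 < M) {μ : Measure (ℤ → AlSym M N)}
    [IsProbabilityMeasure μ]
    (hμ : Ergodic shift μ) (hE : 1 < ∫ y, EAl y ∂μ) : μ (Kalpha M N) = 1 := by
  have hshift : ∫ y, (GAl y (-1) : ℝ) ∂μ = ∫ y, (GAl y 0 : ℝ) ∂μ :=
    (ergodic_shiftInv hμ).toMeasurePreserving.integral_comp' (f := shiftEquiv.symm)
      fun y => (GAl y 0 : ℝ)
  have hdrift : ∫ y, ((-GAl y (-1) : ℤ) : ℝ) ∂μ < 0 := by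
    rw [integral_EAl] at hE
    push_cast
    rw [integral_neg, hshift]
    linarith
  have hK : ∀ᵐ y ∂μ, y ∈ Kalpha M N := by
    filter_upwards [Birkhoff.ae_forall_exists_birkhoffSum_le (g := fun y => -GAl y (-1))
      (ergodic_shiftInv hμ) (measurable_GAl (-1)).neg
      (integrable_intCast_of_abs_le_one (measurable_GAl (-1)).neg
        fun y => by rw [abs_neg]; exact abs_GAl_le y _)
      (fun y => by have := abs_le.1 (abs_GAl_le y (-1)); omega) hdrift] with y hy
    exact mem_Kalpha_of_forall_exists_HAl_le hM fun C => by
      simpa only [birkhoffSum_shiftInv_GAl] using hy C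
  exact (measure_congr (ae_eq_univ.2 (mem_ae_iff.1 hK))).trans measure_univ

end Alpha

section Beta

lemma HBe_eq_height (y : ℤ → BeSym M N) : HBe y = height (GBe y) := rfl

lemma abs_GBe_le (y : ℤ → BeSym M N) (j : ℤ) : |GBe y j| ≤ 1 := by
  unfold GBe; rcases y j with _ | k | k <;> simp

lemma measurable_GBe (j : ℤ) : Measurable fun y : ℤ → BeSym M N => GBe y j :=
  (measurable_from_top (f := fun s : BeSym M N => GBe (fun _ => s) 0)).comp (measurable_pi_apply j)

lemma EBe_eq (y : ℤ → BeSym M N) : EBe y = 1 - GBe y 0 := by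
  unfold EBe GBe; rcases y 0 with _ | k | k <;> norm_num

lemma integral_EBe (μ : Measure (ℤ → BeSym M N)) [IsProbabilityMeasure μ] :
    ∫ y, EBe y ∂μ = 1 - ∫ y, (GBe y 0 : ℝ) ∂μ := by
  simp_rw [EBe_eq]
  rw [integral_sub (integrable_const 1)
    (integrable_intCast_of_abs_le_one (measurable_GBe 0) (abs_GBe_le · 0)), integral_const,
    probReal_univ, one_smul]

lemma birkhoffSum_shift_GBe (y : ℤ → BeSym M N) (n : ℕ) :
    birkhoffSum shift (fun z => GBe z 0) n y = HBe y n := by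
  rw [HBe_eq_height, height_natCast]
  simp only [birkhoffSum, GBe, shift_iterate_apply, zero_add]

lemma mem_Kbeta_of_forall_exists_HBe_le (hM : 0 < M) {y : ℤ → BeSym M N}
    (hy : ∀ C, ∃ n : ℕ, HBe y n ≤ C) : y ∈ Kbeta M N :=
  ⟨_, psiBe'_mem_BbetaSet hM y fun i hi =>
    exists_gt_height_eq_of_eq_one (abs_GBe_le y) hy (by simp [GBe, hi]), phiBe_psiBe' hM y⟩

lemma measure_Kbeta_eq_one (hM : 0 < M) {μ : Measure (ℤ → BeSym M N)}
    [IsProbabilityMeasure μ]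
    (hμ : Ergodic shift μ) (hE : 1 < ∫ y, EBe y ∂μ) : μ (Kbeta M N) = 1 := by
  have hdrift : ∫ y, (GBe y 0 : ℝ) ∂μ < 0 := by
    rw [integral_EBe] at hE
    linarith
  have hK : ∀ᵐ y ∂μ, y ∈ Kbeta M N := by
    filter_upwards [Birkhoff.ae_forall_exists_birkhoffSum_le hμ (measurable_GBe 0)
      (integrable_intCast_of_abs_le_one (measurable_GBe 0) (abs_GBe_le · 0))
      (fun y => (abs_le.1 (abs_GBe_le y 0)).1) hdrift] with y hy
    exact mem_Kbeta_of_forall_exists_HBe_le hM fun C => by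
      simpa only [birkhoffSum_shift_GBe] using hy C
  exact (measure_congr (ae_eq_univ.2 (mem_ae_iff.1 hK))).trans measure_univ

end Beta

end DyckMotzkin

/-- Lemma 2.3(a): for each `γ ∈ {α, β}`, every shift-invariant ergodic probability measure
`ν` on the full shift `Σ_γ` with `∫ E_γ dν > 1` satisfies `ν(K_γ) = 1`. -/
theorem erg_full_measure_K (M N : ℕ) (hM : 2 ≤ M) :
    (∀ ν : ProbabilityMeasure (ℤ → AlSym M N), Ergodic shift ν.toMeasure →
      1 < ∫ y, EAl y ∂ν.toMeasure → ν.toMeasure (Kalpha M N) = 1) ∧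
    (∀ ν : ProbabilityMeasure (ℤ → BeSym M N), Ergodic shift ν.toMeasure →
      1 < ∫ y, EBe y ∂ν.toMeasure → ν.toMeasure (Kbeta M N) = 1) :=
  ⟨fun _ hν hE => DyckMotzkin.measure_Kalpha_eq_one (by omega) hν hE,
    fun _ hν hE => DyckMotzkin.measure_Kbeta_eq_one (by omega) hν hE⟩
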